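/- Let J_μ(φ) = log∫e^{−φ*} − ∫φ dμ for a probability measure μ with finite first moment, defined on convex functions φ. Then for convex φ₀, φ₁ with φ_{1/2} = (φ₀+φ₁)/2, it holds that J_μ(φ_{1/2}) ≥ (1/2)J_μ(φ₀) + (1/2)J_μ(φ₁); i.e., J_μ is midpoint concave along linear interpolation of convex functions. -/

import Mathlib

/-!
For every `z`, the `z`-th term of the infimum defining `e^{-φ_{1/2}*}` at the midpoint of `x` and
`y` is the geometric mean of the `z`-th terms for `e^{-φ₀*}(x)` and `e^{-φ₁*}(y)`, so
`e^{-φ₀*}(x) e^{-φ₁*}(y) ≤ e^{-φ_{1/2}*}((x + y) / 2)²`. The midpoint Prékopa–Leindler inequality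
then gives `∫e^{-φ₀*} ∫e^{-φ₁*} ≤ (∫e^{-φ_{1/2}*})²`; take logarithms, and note that `φ ↦ ∫φ dμ`
is linear.

Prékopa–Leindler on `ℝ`: after rescaling `f` and `g` by reciprocal factors so that they have the
same supremum, the level sets `{f > c}` and `{g > c}` are empty or nonempty together, and their sum
lies in `2 • {h > c}`. The one-dimensional Brunn–Minkowski inequality `|A| + |B| ≤ |A + B|` and the
layer-cake formula then give `∫f + ∫g ≤ 2∫h`, and AM–GM gives the product form. The inequality
tensorizes to `ℝⁿ` by Fubini.
-/

open MeasureTheory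
open scoped ENNReal

/-- `e^{-φ*(x)}` where `φ*` is the Legendre transform of `φ`, computed in `ℝ≥0∞` as
`inf_y exp(φ(y) - ⟨x,y⟩)`. -/
noncomputable def expNegConj {d : ℕ} (φ : EuclideanSpace ℝ (Fin d) → ℝ)
    (x : EuclideanSpace ℝ (Fin d)) : ℝ≥0∞ :=
  ⨅ y, ENNReal.ofReal (Real.exp (φ y - (inner ℝ x y : ℝ)))

/-- The functional `J_μ(φ) = log ∫ e^{-φ*} - ∫ φ dμ`. -/
noncomputable def Jfun {d : ℕ} (μ : Measure (EuclideanSpace ℝ (Fin d)))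
    (φ : EuclideanSpace ℝ (Fin d) → ℝ) : ℝ :=
  Real.log (∫⁻ x, expNegConj φ x).toReal - ∫ y, φ y ∂μ

open Set
open scoped Pointwise

theorem ENNReal.lt_of_mul_le_sq {a b c d : ℝ≥0∞} (ha : c < a) (hb : c < b) (h : a * b ≤ d ^ 2) :
    c < d := by
  by_contra! hdc
  have : c * c < c * c := calc
    c * c < a * b := ENNReal.mul_lt_mul ha hb
    _ ≤ d ^ 2 := h
    _ ≤ c * c := by rw [sq]; exact mul_le_mul' hdc hdc
  exact lt_irrefl _ this

theorem ENNReal.four_mul_le_sq_add (a b : ℝ≥0∞) : 4 * a * b ≤ (a + b) ^ 2 := by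
  rcases eq_or_ne a ⊤ with rfl | ha
  · simp
  rcases eq_or_ne b ⊤ with rfl | hb
  · simp
  lift a to NNReal using ha
  lift b to NNReal using hb
  exact_mod_cast _root_.four_mul_le_sq_add a b

theorem ENNReal.iSup_min_natCast (a : ℝ≥0∞) : ⨆ n : ℕ, min a n = a := by
  rw [← inf_iSup_eq, ENNReal.iSup_natCast, inf_top_eq]

theorem lintegral_eq_lintegral_meas_ofReal_lt {α : Type*} [MeasurableSpace α] (μ : Measure α)
    [SFinite μ] {f : α → ℝ≥0∞} (hf : Measurable f) :
    ∫⁻ x, f x ∂μ = ∫⁻ t in Ioi (0 : ℝ), μ {x | ENNReal.ofReal t < f x} := by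
  have hlevel : MeasurableSet {p : α × ℝ | ENNReal.ofReal p.2 < f p.1} :=
    measurableSet_lt (ENNReal.measurable_ofReal.comp measurable_snd) (hf.comp measurable_fst)
  have hvol (a : ℝ≥0∞) : volume (Ioi (0 : ℝ) ∩ {t | ENNReal.ofReal t < a}) = a := by
    rcases eq_or_ne a ⊤ with rfl | ha
    · simp
    · have : Ioi (0 : ℝ) ∩ {t | ENNReal.ofReal t < a} = Ioo 0 a.toReal := by
        ext t
        simp +contextual [ENNReal.ofReal_lt_iff_lt_toReal, le_of_lt, ha]
      simp [this, ha]
  calc ∫⁻ x, f x ∂μ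
      = ∫⁻ x, (∫⁻ t in Ioi (0 : ℝ), {t : ℝ | ENNReal.ofReal t < f x}.indicator 1 t) ∂μ := by
        refine lintegral_congr fun x => ?_
        rw [lintegral_indicator_one (measurableSet_lt ENNReal.measurable_ofReal measurable_const),
          Measure.restrict_apply' measurableSet_Ioi, inter_comm, hvol]
    _ = ∫⁻ t in Ioi (0 : ℝ), ∫⁻ x, {x | ENNReal.ofReal t < f x}.indicator 1 x ∂μ :=
        lintegral_lintegral_swap (measurable_one.indicator hlevel).aemeasurable
    _ = ∫⁻ t in Ioi (0 : ℝ), μ {x | ENNReal.ofReal t < f x} := by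
        refine lintegral_congr fun t => ?_
        exact lintegral_indicator_one (measurableSet_lt measurable_const hf)

theorem Real.volume_add_volume_le_volume_add_of_isCompact {K L : Set ℝ} (hK : IsCompact K)
    (hL : IsCompact L) (hKne : K.Nonempty) (hLne : L.Nonempty) :
    volume K + volume L ≤ volume (K + L) := by
  set s := sSup K
  set t := sInf L
  have hsK : s ∈ K := hK.sSup_mem hKne
  have htL : t ∈ L := hL.sInf_mem hLne
  have hU : (· + t) '' K ⊆ K + L := fun _ ⟨a, ha, hx⟩ => hx ▸ add_mem_add ha htL
  have hV : (s + ·) '' L ⊆ K + L := fun _ ⟨b, hb, hx⟩ => hx ▸ add_mem_add hsK hb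
  have hUV : (· + t) '' K ∩ (s + ·) '' L ⊆ {s + t} := by
    rintro _ ⟨⟨a, ha, rfl⟩, ⟨b, hb, hab⟩⟩
    have has : a ≤ s := le_csSup hK.bddAbove ha
    have htb : t ≤ b := csInf_le hL.bddBelow hb
    exact le_antisymm (by linarith) (by linarith)
  calc volume K + volume L = volume ((· + t) '' K) + volume ((s + ·) '' L) := by
        simp only [image_add_right, image_add_left, measure_preimage_add_right,
          measure_preimage_add]
    _ = volume ((· + t) '' K ∪ (s + ·) '' L) := by
        rw [← measure_union_add_inter _ ((hL.image (continuous_const_add s)).measurableSet),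
          measure_mono_null hUV (measure_singleton _), add_zero]
    _ ≤ volume (K + L) := measure_mono (union_subset hU hV)

theorem Real.volume_add_volume_le_volume_add {A B : Set ℝ} (hA : MeasurableSet A)
    (hB : MeasurableSet B) (hAne : A.Nonempty) (hBne : B.Nonempty) :
    volume A + volume B ≤ volume (A + B) := by
  obtain ⟨a, ha⟩ := hAne
  obtain ⟨b, hb⟩ := hBne
  rw [hA.measure_eq_iSup_isCompact, hB.measure_eq_iSup_isCompact]
  simp only [iSup_and']
  refine ENNReal.biSup_add_biSup_le' ⟨∅, empty_subset A, isCompact_empty⟩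
    ⟨∅, empty_subset B, isCompact_empty⟩ fun K ⟨hKA, hK⟩ L ⟨hLB, hL⟩ => ?_
  calc volume K + volume L ≤ volume (insert a K) + volume (insert b L) :=
        add_le_add (measure_mono (subset_insert _ _)) (measure_mono (subset_insert _ _))
    _ ≤ volume (insert a K + insert b L) :=
        volume_add_volume_le_volume_add_of_isCompact (hK.insert a) (hL.insert b)
          (insert_nonempty _ _) (insert_nonempty _ _)
    _ ≤ volume (A + B) :=
        measure_mono (add_subset_add (insert_subset ha hKA) (insert_subset hb hLB))

theorem Real.lintegral_add_lintegral_le_two_mul_of_iSup_eq {f g h : ℝ → ℝ≥0∞}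
    (hf : Measurable f) (hg : Measurable g) (hh : Measurable h) (hfg : ⨆ x, f x = ⨆ y, g y)
    (H : ∀ x y, f x * g y ≤ h (midpoint ℝ x y) ^ 2) :
    (∫⁻ x, f x) + ∫⁻ y, g y ≤ 2 * ∫⁻ z, h z := by
  have hlevel (c : ℝ≥0∞) :
      volume {x | c < f x} + volume {y | c < g y} ≤ 2 * volume {z | c < h z} := by
    by_cases hA : ∃ x, c < f x
    · have hB : ∃ y, c < g y := lt_iSup_iff.1 (hfg ▸ lt_iSup_iff.2 hA)
      have hsub : {x | c < f x} + {y | c < g y} ⊆ (2 : ℝ) • {z | c < h z} := by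
        rintro _ ⟨x, hx, y, hy, rfl⟩
        rw [mem_smul_set_iff_inv_smul_mem₀ two_ne_zero, ← invOf_eq_inv, ← midpoint_eq_smul_add]
        exact ENNReal.lt_of_mul_le_sq hx hy (H x y)
      calc volume {x | c < f x} + volume {y | c < g y}
          ≤ volume ({x | c < f x} + {y | c < g y}) :=
            volume_add_volume_le_volume_add (measurableSet_lt measurable_const hf)
              (measurableSet_lt measurable_const hg) hA hB
        _ ≤ volume ((2 : ℝ) • {z | c < h z}) := measure_mono hsub
        _ = 2 * volume {z | c < h z} := by simp [Measure.addHaar_smul]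
    · have hB : ¬∃ y, c < g y := fun hB => hA (lt_iSup_iff.1 (hfg ▸ lt_iSup_iff.2 hB))
      simp only [not_exists] at hA hB
      simp [hA, hB]
  have hmeas (u : ℝ → ℝ≥0∞) : Measurable fun t : ℝ => volume {x | ENNReal.ofReal t < u x} :=
    Antitone.measurable fun s t hst =>
      measure_mono fun x hx => (ENNReal.ofReal_le_ofReal hst).trans_lt hx
  rw [lintegral_eq_lintegral_meas_ofReal_lt volume hf,
    lintegral_eq_lintegral_meas_ofReal_lt volume hg,
    lintegral_eq_lintegral_meas_ofReal_lt volume hh, ← lintegral_add_left (hmeas f),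
    ← lintegral_const_mul _ (hmeas h)]
  exact lintegral_mono fun t => hlevel _

theorem Real.lintegral_mul_lintegral_le_sq_of_iSup_ne_top {f g h : ℝ → ℝ≥0∞}
    (hf : Measurable f) (hg : Measurable g) (hh : Measurable h) (hfM : ⨆ x, f x ≠ ⊤)
    (hgM : ⨆ y, g y ≠ ⊤) (H : ∀ x y, f x * g y ≤ h (midpoint ℝ x y) ^ 2) :
    (∫⁻ x, f x) * ∫⁻ y, g y ≤ (∫⁻ z, h z) ^ 2 := by
  lift ⨆ x, f x to NNReal using hfM with Mf hMf
  lift ⨆ y, g y to NNReal using hgM with Mg hMg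
  rcases eq_or_ne Mf 0 with rfl | hMf0
  · have : ∀ x, f x = 0 := fun x => nonpos_iff_eq_zero.1 (by simpa [← hMf] using le_iSup f x)
    simp [this]
  rcases eq_or_ne Mg 0 with rfl | hMg0
  · have : ∀ y, g y = 0 := fun y => nonpos_iff_eq_zero.1 (by simpa [← hMg] using le_iSup g y)
    simp [this]
  set a : NNReal := NNReal.sqrt (Mg / Mf)
  have ha0 : a ≠ 0 := by positivity
  have ha : (a : ℝ≥0∞) * a⁻¹ = 1 := by rw [← ENNReal.coe_mul, mul_inv_cancel₀ ha0, ENNReal.coe_one]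
  have hsup : ⨆ x, a * f x = ⨆ y, (a⁻¹ : NNReal) * g y := by
    rw [← ENNReal.mul_iSup, ← ENNReal.mul_iSup, ← hMf, ← hMg]
    norm_cast
    rw [eq_inv_mul_iff_mul_eq₀ ha0, ← mul_assoc, NNReal.mul_self_sqrt, div_mul_cancel₀ _ hMf0]
  have hsum := lintegral_add_lintegral_le_two_mul_of_iSup_eq (hf.const_mul a) (hg.const_mul _) hh
    hsup fun x y => by rw [mul_mul_mul_comm, ha, one_mul]; exact H x y
  rw [lintegral_const_mul _ hf, lintegral_const_mul _ hg] at hsum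
  refine (ENNReal.mul_le_mul_iff_right four_ne_zero ENNReal.ofNat_ne_top).1 ?_
  calc 4 * ((∫⁻ x, f x) * ∫⁻ y, g y)
      = 4 * (a * a⁻¹ * ((∫⁻ x, f x) * ∫⁻ y, g y)) := by rw [ha, one_mul]
    _ = 4 * (a * ∫⁻ x, f x) * ((a⁻¹ : NNReal) * ∫⁻ y, g y) := by ring
    _ ≤ (a * (∫⁻ x, f x) + (a⁻¹ : NNReal) * ∫⁻ y, g y) ^ 2 := ENNReal.four_mul_le_sq_add _ _
    _ ≤ (2 * ∫⁻ z, h z) ^ 2 := pow_le_pow_left₀ zero_le hsum 2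
    _ = 4 * (∫⁻ z, h z) ^ 2 := by ring

section PrekopaLeindler

variable {E F : Type*} [AddCommGroup E] [Module ℝ E] [MeasurableSpace E]
  [AddCommGroup F] [Module ℝ F] [MeasurableSpace F]

def IsPrekopaLeindler (μ : Measure E) : Prop :=
  ∀ f g h : E → ℝ≥0∞, Measurable f → Measurable g → Measurable h →
    (∀ x y, f x * g y ≤ h (midpoint ℝ x y) ^ 2) →
      (∫⁻ x, f x ∂μ) * ∫⁻ y, g y ∂μ ≤ (∫⁻ z, h z ∂μ) ^ 2

theorem IsPrekopaLeindler.of_unique [Unique E] (μ : Measure E) : IsPrekopaLeindler μ := by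
  intro f g h _ _ _ H
  have hH := H default default
  rw [midpoint_self] at hH
  simp only [lintegral_unique]
  calc f default * μ univ * (g default * μ univ) = f default * g default * μ univ ^ 2 := by ring
    _ ≤ h default ^ 2 * μ univ ^ 2 := by gcongr
    _ = (h default * μ univ) ^ 2 := by ring

theorem IsPrekopaLeindler.prod {μ : Measure E} {ν : Measure F} [SFinite ν]
    (hμ : IsPrekopaLeindler μ) (hν : IsPrekopaLeindler ν) : IsPrekopaLeindler (μ.prod ν) := by
  intro f g h hf hg hh H
  rw [lintegral_prod _ hf.aemeasurable, lintegral_prod _ hg.aemeasurable,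
    lintegral_prod _ hh.aemeasurable]
  refine hμ _ _ _ hf.lintegral_prod_right' hg.lintegral_prod_right' hh.lintegral_prod_right'
    fun s t => ?_
  exact hν _ _ _ (hf.comp measurable_prodMk_left) (hg.comp measurable_prodMk_left)
    (hh.comp measurable_prodMk_left) fun x y => H (s, x) (t, y)

theorem IsPrekopaLeindler.of_measurePreserving {μ : Measure E} {ν : Measure F} (e : E ≃ᵐ F)
    (he : MeasurePreserving e μ ν) (hmid : ∀ x y, e (midpoint ℝ x y) = midpoint ℝ (e x) (e y))
    (hν : IsPrekopaLeindler ν) : IsPrekopaLeindler μ := by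
  intro f g h hf hg hh H
  have hmid' (u v : F) : e.symm (midpoint ℝ u v) = midpoint ℝ (e.symm u) (e.symm v) :=
    e.injective (by simp [hmid])
  have hint {k : E → ℝ≥0∞} (hk : Measurable k) : ∫⁻ u, k (e.symm u) ∂ν = ∫⁻ x, k x ∂μ :=
    (he.symm e).lintegral_comp hk
  rw [← hint hf, ← hint hg, ← hint hh]
  exact hν _ _ _ (hf.comp e.symm.measurable) (hg.comp e.symm.measurable)
    (hh.comp e.symm.measurable) fun u v => hmid' u v ▸ H _ _

end PrekopaLeindler

theorem Real.isPrekopaLeindler_volume : IsPrekopaLeindler (volume : Measure ℝ) := by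
  intro f g h hf hg hh H
  have htrunc {u : ℝ → ℝ≥0∞} (hu : Measurable u) : ∫⁻ x, u x = ⨆ n : ℕ, ∫⁻ x, min (u x) n := by
    rw [← lintegral_iSup (fun n => hu.min measurable_const)
      fun m n hmn x => min_le_min_left _ (Nat.cast_le.2 hmn)]
    simp only [ENNReal.iSup_min_natCast]
  rw [htrunc hf, htrunc hg, ENNReal.iSup_mul]
  refine iSup_le fun m => ?_
  rw [ENNReal.mul_iSup]
  refine iSup_le fun n => ?_
  refine lintegral_mul_lintegral_le_sq_of_iSup_ne_top (hf.min measurable_const)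
    (hg.min measurable_const) hh ?_ ?_ fun x y => ?_
  · exact ne_top_of_le_ne_top (ENNReal.natCast_ne_top m) (iSup_le fun x => min_le_right _ _)
  · exact ne_top_of_le_ne_top (ENNReal.natCast_ne_top n) (iSup_le fun y => min_le_right _ _)
  · exact (mul_le_mul' (min_le_left _ _) (min_le_left _ _)).trans (H x y)

theorem isPrekopaLeindler_volume_pi : ∀ n : ℕ, IsPrekopaLeindler (volume : Measure (Fin n → ℝ))
  | 0 => .of_unique _
  | n + 1 =>
    (Real.isPrekopaLeindler_volume.prod (isPrekopaLeindler_volume_pi n)).of_measurePreserving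
      (MeasurableEquiv.piFinSuccAbove (fun _ => ℝ) 0) (volume_preserving_piFinSuccAbove _ 0)
      fun _ _ => rfl

theorem EuclideanSpace.isPrekopaLeindler_volume (n : ℕ) :
    IsPrekopaLeindler (volume : Measure (EuclideanSpace ℝ (Fin n))) :=
  (isPrekopaLeindler_volume_pi n).of_measurePreserving (MeasurableEquiv.toLp 2 (Fin n → ℝ)).symm
    (EuclideanSpace.volume_preserving_symm_measurableEquiv_toLp (Fin n)) fun _ _ => rfl

theorem measurable_expNegConj {d : ℕ} (φ : EuclideanSpace ℝ (Fin d) → ℝ) :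
    Measurable (expNegConj φ) :=
  (upperSemicontinuous_iInf fun _ => (ENNReal.continuous_ofReal.comp (Real.continuous_exp.comp
    (continuous_const.sub (continuous_id.inner continuous_const)))).upperSemicontinuous).measurable

theorem expNegConj_mul_le_sq_midpoint {d : ℕ} (φ₀ φ₁ : EuclideanSpace ℝ (Fin d) → ℝ)
    (x y : EuclideanSpace ℝ (Fin d)) :
    expNegConj φ₀ x * expNegConj φ₁ y ≤
      expNegConj (fun z => (φ₀ z + φ₁ z) / 2) (midpoint ℝ x y) ^ 2 := by
  simp only [expNegConj]
  rw [Monotone.map_iInf_of_continuousAt (f := (· ^ 2))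
    (ENNReal.continuous_pow 2).continuousAt (pow_left_mono 2) (ENNReal.top_pow two_ne_zero)]
  refine le_iInf fun z => ?_
  have hinner : inner ℝ (midpoint ℝ x y) z = (inner ℝ x z + inner ℝ y z) / 2 := by
    rw [midpoint_eq_smul_add, invOf_eq_inv, real_inner_smul_left, inner_add_left]
    ring
  calc expNegConj φ₀ x * expNegConj φ₁ y
      ≤ ENNReal.ofReal (Real.exp (φ₀ z - inner ℝ x z))
          * ENNReal.ofReal (Real.exp (φ₁ z - inner ℝ y z)) :=
        mul_le_mul' (iInf_le _ z) (iInf_le _ z)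
    _ = ENNReal.ofReal (Real.exp ((φ₀ z + φ₁ z) / 2 - inner ℝ (midpoint ℝ x y) z)) ^ 2 := by
        rw [← ENNReal.ofReal_mul (Real.exp_pos _).le, ← ENNReal.ofReal_pow (Real.exp_pos _).le,
          ← Real.exp_add, ← Real.exp_nat_mul, hinner]
        congr 2
        push_cast
        ring

theorem Real.log_add_log_le_two_mul_log {a b c : ℝ} (ha : 0 < a) (hb : 0 < b)
    (h : a * b ≤ c ^ 2) : Real.log a + Real.log b ≤ 2 * Real.log c := by
  calc Real.log a + Real.log b = Real.log (a * b) := (Real.log_mul ha.ne' hb.ne').symm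
    _ ≤ Real.log (c ^ 2) := Real.log_le_log (mul_pos ha hb) h
    _ = 2 * Real.log c := by simp [Real.log_pow]

theorem stmt13_general {d : ℕ} (μ : Measure (EuclideanSpace ℝ (Fin d)))
    (φ₀ φ₁ : EuclideanSpace ℝ (Fin d) → ℝ)
    (hi0 : Integrable φ₀ μ) (hi1 : Integrable φ₁ μ)
    (hpos0 : 0 < ∫⁻ x, expNegConj φ₀ x) (hfin0 : ∫⁻ x, expNegConj φ₀ x < ⊤)
    (hpos1 : 0 < ∫⁻ x, expNegConj φ₁ x) (hfin1 : ∫⁻ x, expNegConj φ₁ x < ⊤)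
    (hfinh : ∫⁻ x, expNegConj (fun z => (φ₀ z + φ₁ z) / 2) x < ⊤) :
    (1 / 2) * Jfun μ φ₀ + (1 / 2) * Jfun μ φ₁ ≤
      Jfun μ (fun z => (φ₀ z + φ₁ z) / 2) := by
  have hPL := EuclideanSpace.isPrekopaLeindler_volume d _ _ _ (measurable_expNegConj φ₀)
    (measurable_expNegConj φ₁) (measurable_expNegConj _) (expNegConj_mul_le_sq_midpoint φ₀ φ₁)
  have hlog := Real.log_add_log_le_two_mul_log (ENNReal.toReal_pos hpos0.ne' hfin0.ne)
    (ENNReal.toReal_pos hpos1.ne' hfin1.ne)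
    (by simpa using ENNReal.toReal_mono (ENNReal.pow_ne_top hfinh.ne) hPL)
  have hint : ∫ z, (φ₀ z + φ₁ z) / 2 ∂μ = ((∫ z, φ₀ z ∂μ) + ∫ z, φ₁ z ∂μ) / 2 := by
    rw [integral_div, integral_add hi0 hi1]
  simp only [Jfun, hint]
  linarith

/-- `J_μ` is midpoint concave along linear interpolation of convex
functions: for convex `φ₀, φ₁` and `φ_{1/2} = (φ₀ + φ₁)/2`,
`J_μ(φ_{1/2}) ≥ (1/2) J_μ(φ₀) + (1/2) J_μ(φ₁)`. -/
theorem stmt13 {d : ℕ} (μ : Measure (EuclideanSpace ℝ (Fin d)))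
    [IsProbabilityMeasure μ] (hmom : Integrable (fun x => ‖x‖) μ)
    (φ₀ φ₁ : EuclideanSpace ℝ (Fin d) → ℝ)
    (hc0 : ConvexOn ℝ Set.univ φ₀) (hc1 : ConvexOn ℝ Set.univ φ₁)
    (hi0 : Integrable φ₀ μ) (hi1 : Integrable φ₁ μ)
    (hpos0 : 0 < ∫⁻ x, expNegConj φ₀ x) (hfin0 : ∫⁻ x, expNegConj φ₀ x < ⊤)
    (hpos1 : 0 < ∫⁻ x, expNegConj φ₁ x) (hfin1 : ∫⁻ x, expNegConj φ₁ x < ⊤)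
    (hfinh : ∫⁻ x, expNegConj (fun z => (φ₀ z + φ₁ z) / 2) x < ⊤) :
    (1 / 2) * Jfun μ φ₀ + (1 / 2) * Jfun μ φ₁ ≤
      Jfun μ (fun z => (φ₀ z + φ₁ z) / 2) :=
  stmt13_general μ φ₀ φ₁ hi0 hi1 hpos0 hfin0 hpos1 hfin1 hfinh
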